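/- Let n ≥ 1, N ≥ 1 and d ≥ 1. The following are equivalent: (i) d ≥ 2N−1; (ii) for every choice of nonzero, pairwise non-proportional vectors p_1,…,p_N ∈ ℂ^{n+1}, the linear subspace W = {f ∈ V_{d,n} : f is singular at each p_j} of V_{d,n} has complex dimension binom(d+n, n) − N(n+1). -/

import Mathlib

open MvPolynomial
/-- `V_{d,n}`: the space of homogeneous polynomials of degree `d` in `x_0, …, x_n`. -/
noncomputable def Vdn (n d : ℕ) : Submodule ℂ (MvPolynomial (Fin (n+1)) ℂ) :=
  MvPolynomial.homogeneousSubmodule (Fin (n+1)) ℂ d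

/-- `f` is singular at the point `p ∈ ℂ^{n+1}`: all partial derivatives vanish at `p`. -/
def SingularAt {n : ℕ} (f : MvPolynomial (Fin (n+1)) ℂ) (p : Fin (n+1) → ℂ) : Prop :=
  ∀ i, MvPolynomial.eval p (MvPolynomial.pderiv i f) = 0

/-- The subspace `W` of `V_{d,n}` of polynomials singular at each of the points
`p 0, …, p (N-1)`. -/
noncomputable def Wsub (n d N : ℕ) (p : Fin N → (Fin (n+1) → ℂ)) :
    Submodule ℂ (Vdn n d) where
  carrier := {f | ∀ j, SingularAt (f : MvPolynomial (Fin (n+1)) ℂ) (p j)}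
  add_mem' := by
    intro a b ha hb j i
    simp only [Submodule.coe_add, map_add, ha j i, hb j i, add_zero]
  zero_mem' := by
    intro j i
    simp
  smul_mem' := by
    intro c f hf j i
    rw [SetLike.val_smul, Derivation.map_smul, MvPolynomial.smul_eval, hf j i, mul_zero]


/-!
For `d ≥ 2N - 1` the gradient map `f ↦ (∇f(p_j))_j` from degree-`d` forms to `(ℂ^{n+1})^N` is
onto, which is the dimension count by rank–nullity. To hit `v` at `p_j` and `0` elsewhere, take
`g = ∏_{k ≠ j} ℓ_k² · ℓ₀^(d - 2N + 1)` with `ℓ_k(p_k) = 0`, `ℓ_k(p_j) = ℓ₀(p_j) = 1`, and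
`f = g · L` for a linear form `L`; Euler's identity `p_j ⬝ ∇g(p_j) = d - 1` makes the linear
condition `∇f(p_j) = v` on `L` solvable.

For `d ≤ 2N - 2` put the points on the line `x₂ = ⋯ = xₙ = 0`. The first two partial derivatives
at such points only see the restriction of `f` to the line, a binary form of degree `d`; these
form a space of dimension `d + 1 < 2N`, so the gradient map cannot be onto.
-/

namespace MvPolynomial

theorem finrank_homogeneousSubmodule (σ K : Type*) [Fintype σ] [Field K] (d : ℕ) :
    Module.finrank K (homogeneousSubmodule σ K d) = (Fintype.card σ + d - 1).choose d := by
  classical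
  rw [show homogeneousSubmodule σ K d = restrictSupport K {s | s.degree = d} from
      homogeneousSubmodule_eq_finsupp_supported σ K d,
    Module.finrank_eq_nat_card_basis (basisRestrictSupport K _), ← Sym.card_sym_eq_choose,
    ← Nat.card_eq_fintype_card]
  exact Nat.card_congr ((Sym.equivNatSum σ d).trans (Equiv.subtypeEquivRight fun _ => Iff.rfl)).symm

section killCompl

variable {σ τ R : Type*} [CommRing R] {f : σ → τ} (hf : Function.Injective f)

theorem pderiv_killCompl (i : σ) (p : MvPolynomial τ R) :
    pderiv i (killCompl hf p) = killCompl hf (pderiv (f i) p) := by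
  classical
  induction p using MvPolynomial.induction_on with
  | C a => simp
  | add p q hp hq => simp [hp, hq]
  | mul_X p t h =>
    simp only [map_mul, Derivation.leibniz, smul_eq_mul, map_add, h, pderiv_X, Pi.single_apply]
    by_cases ht : t ∈ Set.range f
    · obtain ⟨s, rfl⟩ := ht
      simp [killCompl, hf.eq_iff, Pi.single_apply]
    · have ht' : ¬∃ s, f s = t := ht
      have hti : t ≠ f i := fun h => ht ⟨i, h.symm⟩
      simp [killCompl, ht', hti]

theorem eval_killCompl {y : τ → R} (hy : ∀ t ∉ Set.range f, y t = 0) (p : MvPolynomial τ R) :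
    eval (y ∘ f) (killCompl hf p) = eval y p := by
  refine RingHom.congr_fun (f := (eval (y ∘ f)).comp (killCompl hf).toRingHom) ?_ p
  ext t
  · simp
  · by_cases ht : t ∈ Set.range f
    · obtain ⟨s, rfl⟩ := ht
      simp [killCompl]
    · have ht' : ¬∃ s, f s = t := ht
      simp [killCompl, ht', hy t ht]

theorem IsHomogeneous.killCompl {p : MvPolynomial τ R} {m : ℕ} (hp : p.IsHomogeneous m) :
    (killCompl hf p).IsHomogeneous m := by
  unfold MvPolynomial.killCompl
  simpa only [one_mul] using hp.aeval (n := 1) _ fun t => by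
    split_ifs
    exacts [isHomogeneous_X _ _, isHomogeneous_zero _ _ _]

end killCompl

variable {σ R : Type*} [CommRing R]

theorem eval_pderiv_eq_zero_of_sq_dvd {x : σ → R} {u f : MvPolynomial σ R} (hu : eval x u = 0)
    (huf : u ^ 2 ∣ f) (i : σ) : eval x (pderiv i f) = 0 := by
  obtain ⟨r, rfl⟩ := huf
  simp [hu]

variable [Fintype σ]

theorem IsHomogeneous.sum_mul_eval_pderiv {φ : MvPolynomial σ R} {m : ℕ} (hφ : φ.IsHomogeneous m)
    (x : σ → R) : ∑ i, x i * eval x (pderiv i φ) = m * eval x φ := by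
  simpa using congrArg (eval x) hφ.sum_X_mul_pderiv

noncomputable def linearForm (a : σ → R) : MvPolynomial σ R := ∑ i, C (a i) * X i

theorem isHomogeneous_linearForm (a : σ → R) : (linearForm a).IsHomogeneous 1 :=
  IsHomogeneous.sum _ _ _ fun i _ => isHomogeneous_C_mul_X (a i) i

@[simp]
theorem eval_linearForm (a x : σ → R) : eval x (linearForm a) = a ⬝ᵥ x := by
  simp [linearForm, dotProduct]

@[simp]
theorem pderiv_linearForm (a : σ → R) (i : σ) : pderiv i (linearForm a) = C (a i) := by
  classical
  simp [linearForm, pderiv_X, Pi.single_apply]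

end MvPolynomial

theorem exists_dotProduct_eq_zero_eq_one {σ K : Type*} [Fintype σ] [Field K] {x y : σ → K}
    (hy : y ∉ K ∙ x) : ∃ a : σ → K, a ⬝ᵥ x = 0 ∧ a ⬝ᵥ y = 1 := by
  classical
  obtain ⟨φ, hφy, hφx⟩ := Submodule.exists_dual_map_eq_bot_of_notMem hy inferInstance
  have hφ : ∀ z, (dotProductEquiv K σ).symm φ ⬝ᵥ z = φ z := fun z =>
    congrArg (· z) ((dotProductEquiv K σ).apply_symm_apply φ)
  have hφx' : φ x = 0 := LinearMap.le_ker_iff_map.mpr hφx (Submodule.mem_span_singleton_self x)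
  refine ⟨(φ y)⁻¹ • (dotProductEquiv K σ).symm φ, ?_, ?_⟩
  · rw [smul_dotProduct, hφ, hφx', smul_zero]
  · rw [smul_dotProduct, hφ, smul_eq_mul, inv_mul_cancel₀ hφy]

namespace MvPolynomial

variable {σ K ι : Type*} [Fintype σ] [Field K] [Fintype ι]

theorem exists_isHomogeneous_eval_eq_one_sq_dvd {x : ι → σ → K} {y : σ → K} (hy : y ≠ 0)
    (hxy : ∀ k, y ∉ K ∙ x k) {m : ℕ} (hm : 2 * Fintype.card ι ≤ m) :
    ∃ g : MvPolynomial σ K, g.IsHomogeneous m ∧ eval y g = 1 ∧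
      ∀ k, ∃ u, eval (x k) u = 0 ∧ u ^ 2 ∣ g := by
  choose a hax hay using fun k => exists_dotProduct_eq_zero_eq_one (hxy k)
  obtain ⟨a₀, -, ha₀y⟩ := exists_dotProduct_eq_zero_eq_one (x := 0) (y := y) (by simpa using hy)
  refine ⟨(∏ k, linearForm (a k) ^ 2) * linearForm a₀ ^ (m - 2 * Fintype.card ι), ?_, ?_,
    fun k => ⟨linearForm (a k), by simp [hax], ?_⟩⟩
  · have h := (IsHomogeneous.prod Finset.univ _ (fun _ => 2) fun k _ =>
      (isHomogeneous_linearForm (a k)).pow 2).mul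
        ((isHomogeneous_linearForm a₀).pow (m - 2 * Fintype.card ι))
    rwa [Finset.sum_const, Finset.card_univ, smul_eq_mul,
      show Fintype.card ι * 2 + 1 * (m - 2 * Fintype.card ι) = m by omega] at h
  · simp [hay, ha₀y]
  · exact (Finset.dvd_prod_of_mem _ (Finset.mem_univ k)).mul_right _

variable [CharZero K]

/-- With `w = ∇g(y)`, the condition on `b` reads `b + (b ⬝ y) • w = v`; Euler's identity
`y ⬝ w = m` shows that `b = v - t • w` with `t = (v ⬝ y) / (m + 1)` solves it. -/
theorem exists_eval_pderiv_mul_linearForm_eq {g : MvPolynomial σ K} {m : ℕ}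
    (hg : g.IsHomogeneous m) {y : σ → K} (hgy : eval y g = 1) (v : σ → K) :
    ∃ b, ∀ i, eval y (pderiv i (g * linearForm b)) = v i := by
  set w : σ → K := fun i => eval y (pderiv i g)
  have hw : y ⬝ᵥ w = m := by simpa [hgy, dotProduct, w] using hg.sum_mul_eval_pderiv y
  set t : K := (v ⬝ᵥ y) / (m + 1)
  have hb : (v - t • w) ⬝ᵥ y = t := by
    rw [sub_dotProduct, smul_dotProduct, dotProduct_comm w, hw, smul_eq_mul]
    have : (m + 1 : K) ≠ 0 := by exact_mod_cast Nat.succ_ne_zero m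
    simp only [t]
    field_simp
    ring
  refine ⟨v - t • w, fun i => ?_⟩
  simp only [Derivation.leibniz, pderiv_linearForm, map_add, smul_eq_mul, map_mul, eval_C,
    eval_linearForm, hb, hgy]
  simp [w]

theorem exists_isHomogeneous_eval_pderiv_eq {x : ι → σ → K} {y : σ → K} (hy : y ≠ 0)
    (hxy : ∀ k, y ∉ K ∙ x k) {m : ℕ} (hm : 2 * Fintype.card ι ≤ m) (v : σ → K) :
    ∃ f : MvPolynomial σ K, f.IsHomogeneous (m + 1) ∧ (∀ i, eval y (pderiv i f) = v i) ∧
      ∀ k i, eval (x k) (pderiv i f) = 0 := by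
  obtain ⟨g, hg, hgy, hgx⟩ := exists_isHomogeneous_eval_eq_one_sq_dvd hy hxy hm
  obtain ⟨b, hb⟩ := exists_eval_pderiv_mul_linearForm_eq hg hgy v
  refine ⟨g * linearForm b, hg.mul (isHomogeneous_linearForm b), hb, fun k i => ?_⟩
  obtain ⟨u, hux, hug⟩ := hgx k
  exact eval_pderiv_eq_zero_of_sq_dvd hux (hug.mul_right _) i

end MvPolynomial

instance (n d : ℕ) : Module.Finite ℂ (Vdn n d) :=
  Module.Finite.iff_fg.mpr (homogeneousSubmodule_fg _ _ d)

theorem finrank_Vdn (n d : ℕ) : Module.finrank ℂ (Vdn n d) = (d + n).choose n := by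
  rw [Vdn, finrank_homogeneousSubmodule, Fintype.card_fin, show n + 1 + d - 1 = d + n by omega,
    Nat.choose_symm_add]

noncomputable def gradientMap (n d N : ℕ) (p : Fin N → Fin (n + 1) → ℂ) :
    Vdn n d →ₗ[ℂ] (Fin N → Fin (n + 1) → ℂ) where
  toFun f j i := eval (p j) (pderiv i f.1)
  map_add' f g := by ext; simp
  map_smul' c f := by ext; simp

@[simp]
theorem gradientMap_apply {n d N : ℕ} (p : Fin N → Fin (n + 1) → ℂ) (f : Vdn n d) (j : Fin N)
    (i : Fin (n + 1)) : gradientMap n d N p f j i = eval (p j) (pderiv i f.1) :=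
  rfl

theorem Wsub_eq_ker_gradientMap (n d N : ℕ) (p : Fin N → Fin (n + 1) → ℂ) :
    Wsub n d N p = LinearMap.ker (gradientMap n d N p) := by
  ext f
  simp only [LinearMap.mem_ker, funext_iff]
  rfl

theorem finrank_Wsub_add_eq_iff_surjective (n d N : ℕ) (p : Fin N → Fin (n + 1) → ℂ) :
    Module.finrank ℂ (Wsub n d N p) + N * (n + 1) = (d + n).choose n ↔
      Function.Surjective (gradientMap n d N p) := by
  have h := LinearMap.finrank_range_add_finrank_ker (gradientMap n d N p)
  rw [finrank_Vdn, ← Wsub_eq_ker_gradientMap] at h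
  have htarget : Module.finrank ℂ (Fin N → Fin (n + 1) → ℂ) = N * (n + 1) := by
    simp [Module.finrank_pi_fintype]
  rw [← LinearMap.range_eq_top, Submodule.eq_top_iff_finrank_eq, htarget]
  omega

theorem gradientMap_surjective {n d N : ℕ} (hd : 2 * N - 1 ≤ d) {p : Fin N → Fin (n + 1) → ℂ}
    (hp0 : ∀ j, p j ≠ 0) (hp : ∀ j j', j ≠ j' → ∀ c : ℂ, p j ≠ c • p j') :
    Function.Surjective (gradientMap n d N p) := by
  have hsingle : ∀ j v, Pi.single j v ∈ LinearMap.range (gradientMap n d N p) := by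
    intro j v
    have hN := j.pos
    have hcard : 2 * Fintype.card {k // k ≠ j} ≤ d - 1 := by
      simp only [ne_eq, Fintype.card_subtype_compl, Fintype.card_fin, Fintype.card_unique]
      omega
    have hspan : ∀ k : {k // k ≠ j}, p j ∉ ℂ ∙ p k := fun k hk => by
      obtain ⟨c, hc⟩ := Submodule.mem_span_singleton.mp hk
      exact hp j k k.2.symm c hc.symm
    obtain ⟨f, hf, hfj, hfk⟩ := exists_isHomogeneous_eval_pderiv_eq (hp0 j) hspan hcard v
    rw [Nat.sub_add_cancel (by omega)] at hf
    refine ⟨⟨f, (mem_homogeneousSubmodule _ _).mpr hf⟩, funext fun k => funext fun i => ?_⟩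
    by_cases hk : k = j
    · subst hk
      simpa using hfj i
    · simpa [hk] using hfk ⟨k, hk⟩ i
  intro z
  rw [← Finset.univ_sum_single z]
  exact Submodule.sum_mem _ fun j _ => hsingle j (z j)

theorem surjective_gradientMap_of_extend {m n d N : ℕ} {ι : Fin (m + 1) → Fin (n + 1)}
    (hι : Function.Injective ι) (q : Fin N → Fin (m + 1) → ℂ)
    (h : Function.Surjective (gradientMap n d N fun j => Function.extend ι (q j) 0)) :
    Function.Surjective (gradientMap m d N q) := by
  intro z
  obtain ⟨f, hf⟩ := h fun j => Function.extend ι (z j) 0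
  refine ⟨⟨killCompl hι f.1, ((mem_homogeneousSubmodule _ _).mp f.2).killCompl hι⟩,
    funext fun j => funext fun i => ?_⟩
  have hq : q j = Function.extend ι (q j) 0 ∘ ι := funext fun i => (hι.extend_apply _ _ _).symm
  have hzero : ∀ t ∉ Set.range ι, Function.extend ι (q j) 0 t = 0 := fun t ht =>
    Function.extend_apply' _ _ _ ht
  rw [gradientMap_apply, pderiv_killCompl, hq, eval_killCompl hι hzero]
  exact (congrFun (congrFun hf j) (ι i)).trans (hι.extend_apply _ _ _)

theorem not_surjective_gradientMap {n d N : ℕ} (p : Fin N → Fin (n + 1) → ℂ)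
    (h : (d + n).choose n < N * (n + 1)) : ¬Function.Surjective (gradientMap n d N p) := by
  rw [← finrank_Wsub_add_eq_iff_surjective]
  omega

theorem exists_not_surjective_gradientMap {n d N : ℕ} (hn : 1 ≤ n) (hd : d + 1 < 2 * N) :
    ∃ p : Fin N → Fin (n + 1) → ℂ, (∀ j, p j ≠ 0) ∧ (∀ j j', j ≠ j' → ∀ c : ℂ, p j ≠ c • p j') ∧
      ¬Function.Surjective (gradientMap n d N p) := by
  set ι : Fin 2 → Fin (n + 1) := Fin.castLE (by omega)
  have hι : Function.Injective ι := Fin.castLE_injective _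
  set q : Fin N → Fin 2 → ℂ := fun j => ![1, (j : ℕ)]
  refine ⟨fun j => Function.extend ι (q j) 0, fun j h => ?_, fun j j' hjj' c h => ?_,
    fun hs => not_surjective_gradientMap q ?_ (surjective_gradientMap_of_extend hι q hs)⟩
  · simpa [hι.extend_apply, q] using congrFun h (ι 0)
  · have h0 : 1 = c := by simpa [hι.extend_apply, q] using congrFun h (ι 0)
    have h1 : ((j : ℕ) : ℂ) = c * (j' : ℕ) := by simpa [hι.extend_apply, q] using congrFun h (ι 1)
    rw [← h0, one_mul, Nat.cast_inj] at h1
    exact hjj' (Fin.ext h1)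
  · rw [Nat.choose_one_right]
    omega

theorem dim_singular_subspace_iff_general (n N d : ℕ) (hn : 1 ≤ n) :
    2 * N - 1 ≤ d ↔
      ∀ p : Fin N → (Fin (n+1) → ℂ), (∀ j, p j ≠ 0) →
        (∀ j j', j ≠ j' → ∀ c : ℂ, p j ≠ c • p j') →
        Module.finrank ℂ (Wsub n d N p) + N * (n+1) = Nat.choose (d+n) n := by
  simp only [finrank_Wsub_add_eq_iff_surjective]
  refine ⟨fun hd p hp0 hp => gradientMap_surjective hd hp0 hp, fun h => ?_⟩
  by_contra hd
  obtain ⟨p, hp0, hp, hns⟩ := exists_not_surjective_gradientMap hn (by omega : d + 1 < 2 * N)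
  exact hns (h p hp0 hp)

/-- Requiring singularity at `N` distinct points of `ℙⁿ` imposes exactly `N(n+1)` independent
conditions on degree-`d` forms (for every configuration of points) if and only if
`d ≥ 2N−1`. The dimension count `dim W = binom(d+n,n) − N(n+1)` is stated additively to
avoid truncated subtraction. -/
theorem dim_singular_subspace_iff (n N d : ℕ) (hn : 1 ≤ n) (hN : 1 ≤ N) (hd : 1 ≤ d) :
    2 * N - 1 ≤ d ↔
      ∀ p : Fin N → (Fin (n+1) → ℂ), (∀ j, p j ≠ 0) →
        (∀ j j', j ≠ j' → ∀ c : ℂ, p j ≠ c • p j') →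
        Module.finrank ℂ (Wsub n d N p) + N * (n+1) = Nat.choose (d+n) n :=
  dim_singular_subspace_iff_general n N d hn
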